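/- arXiv:2502.10276 — 2 statements merged into one kernel-verified Lean document; each statement's English description precedes it below -/
import Mathlib

section
/- Gaussian integral identity (Owen 10,010.1): for real constants a and b, \int_{-\infty}^{Y} \Phi(a + b x) \phi(x) dx equals the standard bivariate normal c.d.f. evaluated at (a/\sqrt{1+b^2}, Y) with correlation \rho = -b/\sqrt{1+b^2}, where \phi and \Phi are the standard normal p.d.f. and c.d.f. -/
/-!
With `s = √(1 - ρ²)`, completing the square in `x` factors the bivariate normal density as
`φ(y) · s⁻¹ φ((x - ρ y) / s)`, so by Fubini and an affine change of variables
`BN(h, k; ρ) = ∫_{y ≤ k} Φ((h - ρ y) / s) φ(y) dy`.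
For `ρ = -b / √(1 + b²)` one has `s = 1 / √(1 + b²)`, and with `h = a / √(1 + b²)` the
argument `(h - ρ y) / s` becomes `a + b y`.
-/

open MeasureTheory

/-- Standard normal p.d.f. -/
noncomputable def stdPdf (x : ℝ) : ℝ :=
  (Real.sqrt (2 * Real.pi))⁻¹ * Real.exp (-x ^ 2 / 2)

/-- Standard normal c.d.f. -/
noncomputable def stdCdf (x : ℝ) : ℝ := ∫ t in Set.Iic x, stdPdf t

/-- Standard bivariate normal c.d.f. with correlation ρ. -/
noncomputable def bvnCdf (h k ρ : ℝ) : ℝ :=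
  ∫ x in Set.Iic h, ∫ y in Set.Iic k,
    (2 * Real.pi * Real.sqrt (1 - ρ ^ 2))⁻¹ *
      Real.exp (-(x ^ 2 - 2 * ρ * x * y + y ^ 2) / (2 * (1 - ρ ^ 2)))

open Set Real

lemma stdPdf_nonneg (x : ℝ) : 0 ≤ stdPdf x := by
  unfold stdPdf; positivity

@[fun_prop]
lemma continuous_stdPdf : Continuous stdPdf := by
  unfold stdPdf; fun_prop

lemma stdPdf_eq_gaussian : stdPdf = fun x => (√(2 * π))⁻¹ * exp (-(1 / 2) * x ^ 2) := by
  ext x; unfold stdPdf; ring_nf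

lemma integrable_stdPdf : Integrable stdPdf := by
  rw [stdPdf_eq_gaussian]
  exact (integrable_exp_neg_mul_sq (by norm_num)).const_mul _

lemma integral_stdPdf : ∫ x, stdPdf x = 1 := by
  rw [stdPdf_eq_gaussian, integral_const_mul, integral_gaussian,
    show π / (1 / 2) = 2 * π by ring, inv_mul_cancel₀ (by positivity)]

section ChangeOfVariables

variable {E : Type*} [NormedAddCommGroup E] [NormedSpace ℝ E] {s : ℝ}

lemma integral_comp_sub_div_Iic (hs : 0 < s) (g : ℝ → E) (m h : ℝ) :
    ∫ x in Iic h, g ((x - m) / s) = s • ∫ u in Iic ((h - m) / s), g u := by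
  have hind : ∀ x, (Iic h).indicator (fun x => g ((x - m) / s)) x
      = (Iic ((h - m) / s)).indicator g ((x - m) / s) := by
    intro x
    simp only [indicator, mem_Iic, div_le_div_iff_of_pos_right hs, sub_le_sub_iff_right]
  rw [← integral_indicator measurableSet_Iic, ← integral_indicator measurableSet_Iic]
  simp_rw [hind]
  rw [integral_sub_right_eq_self (fun x => (Iic ((h - m) / s)).indicator g (x / s)),
    Measure.integral_comp_div, abs_of_pos hs]

end ChangeOfVariables

section Normal

variable {s : ℝ}

lemma integrable_stdPdf_comp_sub_div (hs : 0 < s) (m : ℝ) :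
    Integrable fun x => s⁻¹ * stdPdf ((x - m) / s) :=
  ((integrable_stdPdf.comp_div hs.ne').comp_sub_right m).const_mul _

lemma integral_stdPdf_comp_sub_div (hs : 0 < s) (m : ℝ) :
    ∫ x, s⁻¹ * stdPdf ((x - m) / s) = 1 := by
  rw [integral_const_mul, integral_sub_right_eq_self (fun x => stdPdf (x / s)),
    Measure.integral_comp_div, integral_stdPdf, abs_of_pos hs, smul_eq_mul, mul_one,
    inv_mul_cancel₀ hs.ne']

lemma integral_Iic_stdPdf_comp_sub_div (hs : 0 < s) (m h : ℝ) :
    ∫ x in Iic h, s⁻¹ * stdPdf ((x - m) / s) = stdCdf ((h - m) / s) := by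
  rw [integral_const_mul, integral_comp_sub_div_Iic hs, smul_eq_mul, ← mul_assoc,
    inv_mul_cancel₀ hs.ne', one_mul, stdCdf]

lemma integrable_stdPdf_mul_stdPdf_comp_sub_div (hs : 0 < s) (ρ : ℝ) :
    Integrable (Function.uncurry fun x y => stdPdf y * (s⁻¹ * stdPdf ((x - ρ * y) / s)))
      (volume.prod volume) := by
  have hcont : Continuous
      (Function.uncurry fun x y => stdPdf y * (s⁻¹ * stdPdf ((x - ρ * y) / s))) := by
    unfold Function.uncurry; fun_prop
  refine (integrable_prod_iff' hcont.aestronglyMeasurable).mpr ⟨.of_forall fun y => ?_, ?_⟩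
  · exact (integrable_stdPdf_comp_sub_div hs (ρ * y)).const_mul (stdPdf y)
  · have hmarginal : ∀ y, ∫ x, ‖stdPdf y * (s⁻¹ * stdPdf ((x - ρ * y) / s))‖ = stdPdf y := by
      intro y
      simp_rw [norm_of_nonneg (mul_nonneg (stdPdf_nonneg y)
        (mul_nonneg (inv_nonneg.mpr hs.le) (stdPdf_nonneg _)))]
      rw [integral_const_mul, integral_stdPdf_comp_sub_div hs, mul_one]
    simpa only [Function.uncurry_apply_pair, hmarginal] using integrable_stdPdf

end Normal

noncomputable def bvnPdf (ρ x y : ℝ) : ℝ :=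
  (2 * π * √(1 - ρ ^ 2))⁻¹ * exp (-(x ^ 2 - 2 * ρ * x * y + y ^ 2) / (2 * (1 - ρ ^ 2)))

lemma bvnCdf_eq_integral_bvnPdf (h k ρ : ℝ) :
    bvnCdf h k ρ = ∫ x in Iic h, ∫ y in Iic k, bvnPdf ρ x y := rfl

section Bivariate

variable {ρ : ℝ}

lemma bvnPdf_eq_stdPdf_mul (hρ : ρ ^ 2 < 1) (x y : ℝ) :
    bvnPdf ρ x y =
      stdPdf y * ((√(1 - ρ ^ 2))⁻¹ * stdPdf ((x - ρ * y) / √(1 - ρ ^ 2))) := by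
  rw [bvnPdf]
  have hs : 0 < √(1 - ρ ^ 2) := sqrt_pos.mpr (by linarith)
  have hs2 : √(1 - ρ ^ 2) ^ 2 = 1 - ρ ^ 2 := sq_sqrt (by linarith)
  set s := √(1 - ρ ^ 2)
  have hexp : -(x ^ 2 - 2 * ρ * x * y + y ^ 2) / (2 * (1 - ρ ^ 2)) =
      -y ^ 2 / 2 + -((x - ρ * y) / s) ^ 2 / 2 := by
    rw [← hs2]; field_simp; linear_combination y ^ 2 * hs2
  have h2π : √(2 * π) ^ 2 = 2 * π := sq_sqrt (by positivity)
  rw [hexp, exp_add, stdPdf, stdPdf]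
  field_simp
  rw [h2π]

theorem bvnCdf_eq_integral_stdCdf_mul_stdPdf (hρ : ρ ^ 2 < 1) (h k : ℝ) :
    bvnCdf h k ρ = ∫ y in Iic k, stdCdf ((h - ρ * y) / √(1 - ρ ^ 2)) * stdPdf y := by
  have hs : 0 < √(1 - ρ ^ 2) := sqrt_pos.mpr (by linarith)
  simp_rw [bvnCdf_eq_integral_bvnPdf, bvnPdf_eq_stdPdf_mul hρ]
  rw [integral_integral_swap (by
    rw [Measure.prod_restrict]
    exact (integrable_stdPdf_mul_stdPdf_comp_sub_div hs ρ).restrict)]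
  congr 1 with y
  rw [integral_const_mul, integral_Iic_stdPdf_comp_sub_div hs, mul_comm]

end Bivariate

/-- Owen's identity 10,010.1: ∫_{-∞}^Y Φ(a+bx) φ(x) dx = BN(a/√(1+b²), Y; -b/√(1+b²)). -/
theorem owen_10010_1 (a b Y : ℝ) :
    (∫ x in Set.Iic Y, stdCdf (a + b * x) * stdPdf x) =
      bvnCdf (a / Real.sqrt (1 + b ^ 2)) Y (-(b / Real.sqrt (1 + b ^ 2))) := by
  have hc : 0 < √(1 + b ^ 2) := sqrt_pos.mpr (by positivity)
  have hc2 : √(1 + b ^ 2) ^ 2 = 1 + b ^ 2 := sq_sqrt (by positivity)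
  set c := √(1 + b ^ 2)
  have hρ : 1 - (-(b / c)) ^ 2 = (c ^ 2)⁻¹ := by
    field_simp; linear_combination hc2
  rw [bvnCdf_eq_integral_stdCdf_mul_stdPdf (by linarith [inv_pos.mpr (pow_pos hc 2)]), hρ,
    ← inv_pow, sqrt_sq (inv_nonneg.mpr hc.le)]
  congr 1 with x
  rw [show (a / c - -(b / c) * x) / c⁻¹ = a + b * x by field_simp; ring]
end

section
/- Non-representability of three binary variables by a latent Gaussian discretization: there exists a probability distribution on {0,1}^3 that is not obtained by componentwise thresholding of any trivariate Gaussian, i.e., for which there is no Gaussian vector (Y_1, Y_2, Y_3) and thresholds (\alpha_1, \alpha_2, \alpha_3) with P(X_1 = e_1, X_2 = e_2, X_3 = e_3) = P(sign(Y_1 - \alpha_1) = e_1, sign(Y_2 - \alpha_2) = e_2, sign(Y_3 - \alpha_3) = e_3) for all (e_1,e_2,e_3), where sign encodes \ge threshold as 1. -/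
/-!
Take the uniform distribution on the three patterns with exactly one `1`. If it came from
thresholding `Y = μ + A Z`, the cells with two `1`s would be Gaussian-null; since the Gaussian
charges every nonempty open set, the open half-spaces `{Y_m > α_m}` would be pairwise disjoint.
Each affine function `Y_m - α_m` takes both signs (the one-hot cells are nonempty), so these
half-spaces are nonempty. Two disjoint nonempty open half-spaces have opposite normals
(`a_j = t a_i` with `t ≤ 0`), and three pairwise opposite nonzero normals cannot exist.
-/

open MeasureTheory ProbabilityTheory Matrix

section AffineFunctions

variable {E : Type*} [AddCommGroup E] [Module ℝ E]

theorem LinearMap.exists_nonpos_smul_eq_of_nonneg_imp_nonpos {φ ψ : E →ₗ[ℝ] ℝ}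
    (h : ∀ w, 0 ≤ φ w → ψ w ≤ 0) : ∃ t : ℝ, t ≤ 0 ∧ ψ = t • φ := by
  have hker : LinearMap.ker φ ≤ LinearMap.ker ψ := fun w hw => by
    rw [LinearMap.mem_ker] at hw ⊢
    have hnw := h (-w) (by simp [hw])
    rw [map_neg] at hnw
    linarith [h w hw.ge]
  obtain ⟨t, rfl⟩ : ∃ t : ℝ, t • φ = ψ := by
    simpa [Submodule.mem_span_singleton] using
      mem_span_of_iInf_ker_le_ker (L := fun _ : Unit => φ) (by simpa using hker)
  by_cases hφ : φ = 0
  · exact ⟨0, le_rfl, by simp [hφ]⟩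
  obtain ⟨v, hv⟩ := DFunLike.ne_iff.1 hφ
  refine ⟨t, ?_, rfl⟩
  have hsq : 0 < φ v * φ v := mul_self_pos.2 hv
  have := h (φ v • v) (by rw [map_smul, smul_eq_mul]; exact hsq.le)
  rw [LinearMap.smul_apply, map_smul, smul_eq_mul, smul_eq_mul] at this
  exact nonpos_of_mul_nonpos_left this hsq

theorem LinearMap.exists_eq_zero_of_pairwise_nonneg_imp_nonpos (φ : Fin 3 → E →ₗ[ℝ] ℝ)
    (h : ∀ i j, i ≠ j → ∀ w, 0 ≤ φ i w → φ j w ≤ 0) : ∃ i, φ i = 0 := by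
  obtain ⟨s, hs, h1⟩ := exists_nonpos_smul_eq_of_nonneg_imp_nonpos (h 0 1 (by decide))
  obtain ⟨t, ht, h2⟩ := exists_nonpos_smul_eq_of_nonneg_imp_nonpos (h 0 2 (by decide))
  obtain ⟨r, hr, h21⟩ := exists_nonpos_smul_eq_of_nonneg_imp_nonpos (h 1 2 (by decide))
  by_cases h0 : φ 0 = 0
  · exact ⟨0, h0⟩
  have htrs : t = r * s := smul_left_injective ℝ h0 <| by
    simp only [← h2, h21, h1, smul_smul]
  refine ⟨2, ?_⟩
  rw [h2, le_antisymm ht (htrs ▸ mul_nonneg_of_nonpos_of_nonpos hr hs), zero_smul]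

variable {P : Type*} [AddTorsor E P]

theorem AffineMap.linear_nonpos_of_disjoint_pos {f g : P →ᵃ[ℝ] ℝ} (hf : ∃ y, 0 < f y)
    (hfg : ∀ z, 0 < f z → g z ≤ 0) {w : E} (hw : 0 ≤ f.linear w) : g.linear w ≤ 0 := by
  by_contra! hgw
  obtain ⟨y, hy⟩ := hf
  obtain ⟨n, hn⟩ := exists_nat_gt (-g y / g.linear w)
  rw [div_lt_iff₀ hgw] at hn
  have hfz := hfg ((n : ℝ) • w +ᵥ y) <| by
    rw [map_vadd, map_smul, smul_eq_mul, vadd_eq_add]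
    positivity
  rw [map_vadd, map_smul, smul_eq_mul, vadd_eq_add] at hfz
  linarith

theorem AffineMap.exists_pos_of_nonneg_of_neg (f : P →ᵃ[ℝ] ℝ) {a b : P} (ha : 0 ≤ f a)
    (hb : f b < 0) : ∃ y, 0 < f y :=
  ⟨lineMap b a (2 : ℝ), by rw [apply_lineMap, lineMap_apply_ring']; linarith⟩

theorem AffineMap.linear_ne_zero_of_nonneg_of_neg (f : P →ᵃ[ℝ] ℝ) {a b : P} (ha : 0 ≤ f a)
    (hb : f b < 0) : f.linear ≠ 0 := fun h => by
  have := f.linearMap_vsub a b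
  rw [h, LinearMap.zero_apply, vsub_eq_sub] at this
  linarith

theorem AffineMap.not_pairwise_disjoint_pos (f : Fin 3 → P →ᵃ[ℝ] ℝ)
    (hsign : ∀ i, ∃ a b, 0 ≤ f i a ∧ f i b < 0) :
    ¬ ∀ i j, i ≠ j → ∀ z, 0 < f i z → f j z ≤ 0 := fun hdisj => by
  obtain ⟨i, hi⟩ := LinearMap.exists_eq_zero_of_pairwise_nonneg_imp_nonpos (fun i => (f i).linear)
    fun i j hij _ => by
      obtain ⟨a, b, ha, hb⟩ := hsign i
      exact linear_nonpos_of_disjoint_pos ((f i).exists_pos_of_nonneg_of_neg ha hb) (hdisj i j hij)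
  obtain ⟨a, b, ha, hb⟩ := hsign i
  exact (f i).linear_ne_zero_of_nonneg_of_neg ha hb hi

end AffineFunctions

def oneHot {ι : Type*} [DecidableEq ι] (i : ι) : ι → Bool := fun m => decide (m = i)

noncomputable def uniformOneHot (e : Fin 3 → Bool) : ℝ :=
  if e ∈ Finset.univ.image oneHot then 1 / 3 else 0

theorem sum_uniformOneHot : ∑ e, uniformOneHot e = 1 := by
  simp only [uniformOneHot, Finset.sum_ite_mem, Finset.univ_inter, Finset.sum_const]
  rw [show (Finset.univ.image (oneHot : Fin 3 → _)).card = 3 by decide]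
  norm_num

theorem uniformOneHot_nonneg (e : Fin 3 → Bool) : 0 ≤ uniformOneHot e := by
  unfold uniformOneHot; split_ifs <;> norm_num

theorem uniformOneHot_oneHot (i : Fin 3) : uniformOneHot (oneHot i) = 1 / 3 :=
  if_pos (Finset.mem_image_of_mem _ (Finset.mem_univ i))

theorem uniformOneHot_eq_zero {e : Fin 3 → Bool} {i j : Fin 3} (hij : i ≠ j) (hi : e i = true)
    (hj : e j = true) : uniformOneHot e = 0 := by
  refine if_neg fun he => hij ?_
  obtain ⟨k, -, rfl⟩ := Finset.mem_image.1 he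
  simp only [oneHot, decide_eq_true_eq] at hi hj
  rw [hi, hj]

section ThresholdCell

variable {X ι : Type*}

def thresholdCell (Y : X → ι → ℝ) (α : ι → ℝ) (e : ι → Bool) : Set X :=
  {x | ∀ m, (α m ≤ Y x m ↔ e m = true)}

theorem mem_thresholdCell_decide (Y : X → ι → ℝ) (α : ι → ℝ) (x : X) :
    x ∈ thresholdCell Y α (fun m => decide (α m ≤ Y x m)) := fun m => by
  rw [decide_eq_true_iff]

theorem le_of_measure_thresholdCell_eq_zero [TopologicalSpace X] [MeasurableSpace X]
    {ν : Measure X} [ν.IsOpenPosMeasure] [Finite ι] {Y : X → ι → ℝ} (hY : Continuous Y)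
    {α : ι → ℝ} {i j : ι}
    (hnull : ∀ e : ι → Bool, e i = true → e j = true → ν (thresholdCell Y α e) = 0)
    {x : X} (hx : α i < Y x i) : Y x j ≤ α j := by
  by_contra! hxj
  have hopen : IsOpen {x | α i < Y x i ∧ α j < Y x j} :=
    (isOpen_lt continuous_const ((continuous_apply i).comp hY)).inter
      (isOpen_lt continuous_const ((continuous_apply j).comp hY))
  have hcover : {x | α i < Y x i ∧ α j < Y x j} ⊆
      ⋃ (e : ι → Bool) (_ : e i = true ∧ e j = true), thresholdCell Y α e := fun x hx =>
    Set.mem_biUnion (x := fun m => decide (α m ≤ Y x m))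
      ⟨decide_eq_true hx.1.le, decide_eq_true hx.2.le⟩ (mem_thresholdCell_decide Y α x)
  refine (hopen.measure_pos ν ⟨x, hx, hxj⟩).ne' (measure_mono_null hcover ?_)
  exact measure_iUnion_null fun e => measure_iUnion_null fun he => hnull e he.1 he.2

end ThresholdCell

theorem isOpenPosMeasure_gaussianReal (μ : ℝ) {v : NNReal} (hv : v ≠ 0) :
    (gaussianReal μ v).IsOpenPosMeasure :=
  (gaussianReal_absolutelyContinuous' μ hv).isOpenPosMeasure

/-- Non-representability of three binary variables by a latent Gaussian discretization:
there is a probability distribution on {0,1}³ that is not obtained by componentwise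
thresholding of any (possibly degenerate) trivariate Gaussian vector, the latter being
written as Y = μ + A Z with Z a standard trivariate normal. -/
theorem three_binary_not_latent_gaussian :
    ∃ p : (Fin 3 → Bool) → ℝ,
      (∀ e, 0 ≤ p e) ∧ (∑ e : Fin 3 → Bool, p e = 1) ∧
      ¬ ∃ (μ : Fin 3 → ℝ) (A : Matrix (Fin 3) (Fin 3) ℝ) (α : Fin 3 → ℝ),
          ∀ e : Fin 3 → Bool,
            p e =
              ((Measure.pi fun _ : Fin 3 => gaussianReal 0 1)
                {z : Fin 3 → ℝ | ∀ m : Fin 3,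
                  (α m ≤ μ m + A.mulVec z m ↔ e m = true)}).toReal := by
  refine ⟨uniformOneHot, uniformOneHot_nonneg, sum_uniformOneHot, ?_⟩
  rintro ⟨μ, A, α, h⟩
  have := isOpenPosMeasure_gaussianReal 0 one_ne_zero
  set ν := Measure.pi fun _ : Fin 3 => gaussianReal 0 1
  set Y : (Fin 3 → ℝ) → Fin 3 → ℝ := fun z => μ + A *ᵥ z
  change ∀ e, uniformOneHot e = (ν (thresholdCell Y α e)).toReal at h
  have hY : Continuous Y := by fun_prop
  have hnull : ∀ e, uniformOneHot e = 0 → ν (thresholdCell Y α e) = 0 := fun e he =>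
    ((ENNReal.toReal_eq_zero_iff _).1 (he ▸ h e).symm).resolve_right (measure_ne_top ν _)
  have hne : ∀ i, (thresholdCell Y α (oneHot i)).Nonempty := fun i =>
    nonempty_of_measure_ne_zero (μ := ν) fun h0 => by
      simpa [h0, uniformOneHot_oneHot] using h (oneHot i)
  let f : Fin 3 → (Fin 3 → ℝ) →ᵃ[ℝ] ℝ := fun m =>
    (LinearMap.proj m ∘ₗ A.mulVecLin).toAffineMap + AffineMap.const ℝ _ (μ m - α m)
  have hf : ∀ m z, f m z = Y z m - α m := fun m z => by
    change (A *ᵥ z) m + (μ m - α m) = μ m + (A *ᵥ z) m - α m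
    ring
  refine AffineMap.not_pairwise_disjoint_pos f (fun i => ?_) fun i j hij z hz => ?_
  · obtain ⟨a, ha⟩ := hne i
    obtain ⟨b, hb⟩ := hne (i + 1)
    refine ⟨a, b, ?_, ?_⟩
    · rw [hf, sub_nonneg]; exact (ha i).2 (by simp [oneHot])
    · rw [hf, sub_neg]; exact not_le.1 fun h => by simpa [oneHot] using (hb i).1 h
  · rw [hf, sub_pos] at hz
    rw [hf, sub_nonpos]
    exact le_of_measure_thresholdCell_eq_zero hY
      (fun e hi hj => hnull e (uniformOneHot_eq_zero hij hi hj)) hz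
end
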